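/- Let Z be a random variable with P(Z ≤ 0) = τ ∈ (0,1), and let μ be a real number with |μ| ≤ B for some B > 0. With φ the asymmetric Laplace density with parameter τ, there exists a constant C_0 > 0 depending only on B and τ such that E|φ(Z−μ)/φ(Z) − 1| ≥ C_0 · min(τ, 1−τ) · |μ|. -/

import Mathlib

open MeasureTheory Real

/-- The check function `ρ_τ(z) = z(τ − 1_{z ≤ 0})`. -/
noncomputable def checkFn (τ z : ℝ) : ℝ := z * (τ - if z ≤ 0 then 1 else 0)

/-- The asymmetric Laplace density `φ(z) = τ(1−τ)e^{−ρ_τ(z)}`. -/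
noncomputable def ald (τ z : ℝ) : ℝ := τ * (1 - τ) * Real.exp (-(checkFn τ z))

/-!
The ratio `φ(z - m) / φ(z)` equals `exp (ρ_τ z - ρ_τ (z - m))`. For `m ≥ 0` and `z ≤ 0` both
points lie on the left branch of `ρ_τ`, so `|φ(z - m)/φ(z) - 1| = 1 - e^{-(1-τ)m}`; for `m < 0`
and `z > 0` both lie on the right branch and it equals `1 - e^{τm}`. These events have
probabilities `τ` and `1 - τ`, and on `[0, B]` concavity gives `1 - e^{-x} ≥ (1 - e^{-B})/B · x`,
so the expectation is at least `(1 - e^{-B})/B · τ(1-τ)|m|`, and `τ(1-τ) ≥ min τ (1-τ) / 2`.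
Integrability holds because `ρ_τ` is `1`-Lipschitz, which bounds the ratio by `e^{|m|}`.
-/

lemma checkFn_of_nonpos (τ : ℝ) {z : ℝ} (hz : z ≤ 0) : checkFn τ z = (τ - 1) * z := by
  rw [checkFn, if_pos hz, mul_comm]

lemma checkFn_of_pos (τ : ℝ) {z : ℝ} (hz : 0 < z) : checkFn τ z = τ * z := by
  rw [checkFn, if_neg hz.not_ge, sub_zero, mul_comm]

lemma lipschitzWith_one_checkFn {τ : ℝ} (hτ0 : 0 ≤ τ) (hτ1 : τ ≤ 1) :
    LipschitzWith 1 (checkFn τ) := by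
  refine LipschitzWith.mk_one fun a b => ?_
  simp only [Real.dist_eq, abs_le]
  rcases le_or_gt a 0 with ha | ha <;> rcases le_or_gt b 0 with hb | hb <;>
    simp only [checkFn_of_nonpos, checkFn_of_pos, ha, hb] <;>
    rcases abs_cases (a - b) with ⟨h, _⟩ | ⟨h, _⟩ <;> constructor <;> nlinarith

lemma continuous_ald {τ : ℝ} (hτ0 : 0 ≤ τ) (hτ1 : τ ≤ 1) : Continuous (ald τ) :=
  continuous_const.mul (lipschitzWith_one_checkFn hτ0 hτ1).continuous.neg.rexp

lemma ald_sub_div_ald {τ : ℝ} (hτ : τ * (1 - τ) ≠ 0) (z m : ℝ) :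
    ald τ (z - m) / ald τ z = exp (checkFn τ z - checkFn τ (z - m)) := by
  rw [ald, ald, mul_div_mul_left _ _ hτ, ← exp_sub]
  ring_nf

lemma abs_ald_sub_div_ald_sub_one_le {τ : ℝ} (hτ0 : 0 < τ) (hτ1 : τ < 1) (z m : ℝ) :
    |ald τ (z - m) / ald τ z - 1| ≤ exp |m| := by
  have hlip : checkFn τ z - checkFn τ (z - m) ≤ |m| := by
    have := (lipschitzWith_one_checkFn hτ0.le hτ1.le).dist_le_mul z (z - m)
    simp only [Real.dist_eq, NNReal.coe_one, one_mul, sub_sub_cancel] at this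
    exact (le_abs_self _).trans this
  rw [ald_sub_div_ald (by nlinarith), abs_le]
  constructor
  · nlinarith [exp_pos (checkFn τ z - checkFn τ (z - m)), one_le_exp (abs_nonneg m)]
  · nlinarith [exp_le_exp.2 hlip]

lemma abs_ald_sub_div_ald_sub_one_of_nonpos {τ : ℝ} (hτ0 : 0 < τ) (hτ1 : τ < 1) {z m : ℝ}
    (hz : z ≤ 0) (hm : 0 ≤ m) : |ald τ (z - m) / ald τ z - 1| = 1 - exp (-((1 - τ) * m)) := by
  rw [ald_sub_div_ald (by nlinarith), checkFn_of_nonpos τ hz,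
    checkFn_of_nonpos τ (by linarith : z - m ≤ 0), abs_sub_comm,
    abs_of_nonneg (sub_nonneg.2 (exp_le_one_iff.2 (by nlinarith)))]
  ring_nf

lemma abs_ald_sub_div_ald_sub_one_of_pos {τ : ℝ} (hτ0 : 0 < τ) (hτ1 : τ < 1) {z m : ℝ}
    (hz : 0 < z) (hm : m ≤ 0) : |ald τ (z - m) / ald τ z - 1| = 1 - exp (τ * m) := by
  rw [ald_sub_div_ald (by nlinarith), checkFn_of_pos τ hz,
    checkFn_of_pos τ (by linarith : 0 < z - m), abs_sub_comm,
    abs_of_nonneg (sub_nonneg.2 (exp_le_one_iff.2 (by nlinarith)))]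
  ring_nf

lemma mul_le_one_sub_exp_neg {B x : ℝ} (hB : 0 < B) (hx0 : 0 ≤ x) (hxB : x ≤ B) :
    (1 - exp (-B)) / B * x ≤ 1 - exp (-x) := by
  have h := convexOn_exp.2 (Set.mem_univ 0) (Set.mem_univ (-B))
    (sub_nonneg.2 ((div_le_one hB).2 hxB)) (div_nonneg hx0 hB.le) (sub_add_cancel 1 (x / B))
  simp only [smul_eq_mul, mul_zero, zero_add, exp_zero, mul_one] at h
  rw [show x / B * -B = -x by field_simp] at h
  rw [div_mul_eq_mul_div, div_le_iff₀ hB]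
  have hB' : B * (1 - x / B + x / B * exp (-B)) = B - x + x * exp (-B) := by
    field_simp
  nlinarith [mul_le_mul_of_nonneg_left h hB.le]

section Integral

variable {Ω : Type*} [MeasurableSpace Ω] {P : Measure Ω}

lemma mul_measureReal_le_integral_of_le_on [IsFiniteMeasure P] {f : Ω → ℝ} (hf0 : 0 ≤ᵐ[P] f)
    (hf : Integrable f P) {c : ℝ} (hc : 0 ≤ c) {s : Set Ω} (hcf : ∀ ω ∈ s, c ≤ f ω) :
    c * P.real s ≤ ∫ ω, f ω ∂P :=
  (mul_le_mul_of_nonneg_left (measureReal_mono hcf) hc).trans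
    (mul_meas_ge_le_integral_of_nonneg hf0 hf c)

variable {Z : Ω → ℝ} {τ : ℝ}

lemma integrable_abs_ald_sub_div_ald_sub_one [IsFiniteMeasure P] (hZ : AEMeasurable Z P)
    (hτ0 : 0 < τ) (hτ1 : τ < 1) (m : ℝ) :
    Integrable (fun ω => |ald τ (Z ω - m) / ald τ (Z ω) - 1|) P := by
  have hald := (continuous_ald hτ0.le hτ1.le).measurable
  refine Integrable.of_bound ?_ (exp |m|) (ae_of_all _ fun ω => ?_)
  · exact (((hald.comp_aemeasurable (hZ.sub_const m)).div
      (hald.comp_aemeasurable hZ)).sub_const 1).abs.aestronglyMeasurable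
  · rw [Real.norm_eq_abs, abs_abs]
    exact abs_ald_sub_div_ald_sub_one_le hτ0 hτ1 (Z ω) m

lemma mul_le_integral_abs_ald_sub_div_ald_sub_one [IsProbabilityMeasure P]
    (hZ : AEMeasurable Z P) (hτ0 : 0 < τ) (hτ1 : τ < 1) (hPZ : P.real {ω | Z ω ≤ 0} = τ)
    {B : ℝ} (hB : 0 < B) {m : ℝ} (hm : |m| ≤ B) :
    (1 - exp (-B)) / B * (τ * (1 - τ)) * |m| ≤
      ∫ ω, |ald τ (Z ω - m) / ald τ (Z ω) - 1| ∂P := by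
  have hf0 : 0 ≤ᵐ[P] fun ω => |ald τ (Z ω - m) / ald τ (Z ω) - 1| :=
    ae_of_all _ fun ω => abs_nonneg _
  have hf := integrable_abs_ald_sub_div_ald_sub_one hZ hτ0 hτ1 m
  rw [abs_le] at hm
  rcases le_total 0 m with hm0 | hm0
  · calc (1 - exp (-B)) / B * (τ * (1 - τ)) * |m|
          = (1 - exp (-B)) / B * ((1 - τ) * m) * τ := by rw [abs_of_nonneg hm0]; ring
      _ ≤ (1 - exp (-((1 - τ) * m))) * P.real {ω | Z ω ≤ 0} := by
          rw [hPZ]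
          gcongr
          exact mul_le_one_sub_exp_neg hB (by nlinarith) (by nlinarith)
      _ ≤ _ := mul_measureReal_le_integral_of_le_on hf0 hf
          (sub_nonneg.2 (exp_le_one_iff.2 (by nlinarith))) fun ω hω =>
            (abs_ald_sub_div_ald_sub_one_of_nonpos hτ0 hτ1 hω hm0).ge
  · have hPZc : P.real {ω | Z ω ≤ 0}ᶜ = 1 - τ := by
      have hS : NullMeasurableSet {ω | Z ω ≤ 0} P := hZ.nullMeasurable measurableSet_Iic
      rw [probReal_compl_eq_one_sub₀ hS, hPZ]
    calc (1 - exp (-B)) / B * (τ * (1 - τ)) * |m|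
          = (1 - exp (-B)) / B * (-(τ * m)) * (1 - τ) := by rw [abs_of_nonpos hm0]; ring
      _ ≤ (1 - exp (-(-(τ * m)))) * (1 - τ) := by
          gcongr
          exact mul_le_one_sub_exp_neg hB (by nlinarith) (by nlinarith)
      _ = (1 - exp (τ * m)) * P.real {ω | Z ω ≤ 0}ᶜ := by rw [neg_neg, hPZc]
      _ ≤ _ := mul_measureReal_le_integral_of_le_on hf0 hf
          (sub_nonneg.2 (exp_le_one_iff.2 (by nlinarith))) fun ω hω =>
            (abs_ald_sub_div_ald_sub_one_of_pos hτ0 hτ1 (not_le.1 hω) hm0).ge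

end Integral

/-- if `P(Z ≤ 0) = τ` and `|μ| ≤ B`, then there is `C₀ > 0` depending only
on `B` and `τ` with `E|φ(Z−μ)/φ(Z) − 1| ≥ C₀·min(τ,1−τ)·|μ|`. -/
theorem ald_expected_ratio_lower_bound
    {Ω : Type*} [MeasurableSpace Ω] (P : Measure Ω) [IsProbabilityMeasure P]
    (Z : Ω → ℝ) (hZ : Measurable Z)
    (τ : ℝ) (hτ : τ ∈ Set.Ioo (0:ℝ) 1)
    (hPZ : P {ω | Z ω ≤ 0} = ENNReal.ofReal τ)
    (B : ℝ) (hB : 0 < B) :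
    ∃ C₀ > 0, ∀ m : ℝ, |m| ≤ B →
      C₀ * min τ (1 - τ) * |m| ≤ ∫ ω, |ald τ (Z ω - m) / ald τ (Z ω) - 1| ∂P := by
  obtain ⟨hτ0, hτ1⟩ := hτ
  have hPZ' : P.real {ω | Z ω ≤ 0} = τ := by
    rw [measureReal_def, hPZ, ENNReal.toReal_ofReal hτ0.le]
  have hmin : min τ (1 - τ) ≤ 2 * (τ * (1 - τ)) := by
    rcases le_total τ (1 - τ) with h | h
    · rw [min_eq_left h]; nlinarith
    · rw [min_eq_right h]; nlinarith
  have hK : 0 < (1 - exp (-B)) / B := div_pos (sub_pos.2 (exp_lt_one_iff.2 (neg_lt_zero.2 hB))) hB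
  refine ⟨(1 - exp (-B)) / B / 2, by positivity, fun m hm => ?_⟩
  calc (1 - exp (-B)) / B / 2 * min τ (1 - τ) * |m|
      ≤ (1 - exp (-B)) / B * (τ * (1 - τ)) * |m| := by
        gcongr ?_ * _
        linarith [mul_le_mul_of_nonneg_left hmin hK.le]
    _ ≤ _ := mul_le_integral_abs_ald_sub_div_ald_sub_one hZ.aemeasurable hτ0 hτ1 hPZ' hB hm
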